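/- arXiv:2207.10889 — 2 statements merged into one kernel-verified Lean document; each statement's English description precedes it below -/
import Mathlib

section
/- Let G be a finite simple triangle-free graph with vertex set V and edge set E. Let F be the set of unordered pairs {u,w} of distinct vertices that are not adjacent in G but have a common neighbor. Then |F| + |V| ≥ |E|. -/
/-!
For an edge `vu`, triangle-freeness puts every other neighbour of `u` at distance two from `v`,
so `deg u ≤ deg₂ v + 1`, where `deg₂` is the degree in the distance-two graph. Averaging over
the neighbours of `v` gives `∑_{u ~ v} deg u / deg v ≤ deg₂ v + 1`, while pairing the terms
`deg u / deg v + deg v / deg u ≥ 2` shows the sum of the left-hand sides over all `v` is at least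
`∑ deg v = 2|E|`. Hence `2|E| ≤ 2|F| + |V|`.
-/

open Finset

lemma two_le_div_add_div {𝕜 : Type*} [Field 𝕜] [LinearOrder 𝕜] [IsStrictOrderedRing 𝕜]
    {a b : 𝕜} (ha : 0 < a) (hb : 0 < b) : 2 ≤ a / b + b / a := by
  rw [div_add_div _ _ hb.ne' ha.ne', le_div_iff₀ (mul_pos hb ha)]
  nlinarith [sq_nonneg (a - b)]

namespace SimpleGraph

variable {V : Type*}

def distTwoGraph (G : SimpleGraph V) : SimpleGraph V where
  Adj u w := u ≠ w ∧ ¬G.Adj u w ∧ ∃ v, G.Adj u v ∧ G.Adj v w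
  symm := ⟨fun _ _ ⟨hne, hnadj, v, huv, hvw⟩ ↦
    ⟨hne.symm, mt G.adj_symm hnadj, v, hvw.symm, huv.symm⟩⟩
  loopless := ⟨fun _ h ↦ h.1 rfl⟩

@[simp]
lemma distTwoGraph_adj {G : SimpleGraph V} {u w : V} :
    G.distTwoGraph.Adj u w ↔ u ≠ w ∧ ¬G.Adj u w ∧ ∃ v, G.Adj u v ∧ G.Adj v w :=
  Iff.rfl

lemma edgeSet_distTwoGraph (G : SimpleGraph V) :
    G.distTwoGraph.edgeSet = {e : Sym2 V | ∃ u w : V, e = s(u, w) ∧ u ≠ w ∧ ¬G.Adj u w ∧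
        ∃ v : V, G.Adj u v ∧ G.Adj v w} := by
  ext e
  induction e using Sym2.ind with
  | _ u w =>
    refine ⟨fun h ↦ ⟨u, w, rfl, h⟩, fun ⟨_, _, he, h⟩ ↦ ?_⟩
    rcases Sym2.eq_iff.mp he with ⟨rfl, rfl⟩ | ⟨rfl, rfl⟩
    exacts [h, G.distTwoGraph.adj_symm h]

variable [Fintype V] {G : SimpleGraph V} [DecidableRel G.Adj]

instance [DecidableEq V] : DecidableRel G.distTwoGraph.Adj := fun u w ↦
  inferInstanceAs (Decidable (u ≠ w ∧ ¬G.Adj u w ∧ ∃ v, G.Adj u v ∧ G.Adj v w))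

lemma sum_degree_le_sum_sum_div {𝕜 : Type*} [Field 𝕜] [LinearOrder 𝕜] [IsStrictOrderedRing 𝕜]
    {f : V → 𝕜} (hf : ∀ u v, G.Adj u v → 0 < f u) :
    ∑ v, (G.degree v : 𝕜) ≤ ∑ v, ∑ u ∈ G.neighborFinset v, f u / f v := by
  have hswap : ∑ v, ∑ u ∈ G.neighborFinset v, f u / f v =
      ∑ v, ∑ u ∈ G.neighborFinset v, f v / f u :=
    sum_comm' fun _ _ ↦ by simp [G.adj_comm]
  suffices 2 * ∑ v, (G.degree v : 𝕜) ≤ 2 * ∑ v, ∑ u ∈ G.neighborFinset v, f u / f v by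
    linarith
  calc 2 * ∑ v, (G.degree v : 𝕜) = ∑ v, ∑ _u ∈ G.neighborFinset v, (2 : 𝕜) := by
        simp [mul_sum, mul_comm]
    _ ≤ ∑ v, ∑ u ∈ G.neighborFinset v, (f u / f v + f v / f u) := by
        gcongr with v _ u hu
        have hvu := (mem_neighborFinset ..).mp hu
        exact two_le_div_add_div (hf u v hvu.symm) (hf v u hvu)
    _ = 2 * ∑ v, ∑ u ∈ G.neighborFinset v, f u / f v := by
        simp only [sum_add_distrib, ← hswap]
        ring

variable [DecidableEq V]

lemma degree_le_degree_distTwoGraph_add_one (hG : G.CliqueFree 3) {v u : V} (hvu : G.Adj v u) :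
    G.degree u ≤ G.distTwoGraph.degree v + 1 := by
  have hsub : (G.neighborFinset u).erase v ⊆ G.distTwoGraph.neighborFinset v := by
    intro w hw
    obtain ⟨hwv, huw⟩ := mem_erase.mp hw
    rw [mem_neighborFinset] at huw ⊢
    exact distTwoGraph_adj.mpr ⟨Ne.symm hwv,
      fun hvw ↦ hG {v, u, w} (is3Clique_triple_iff.mpr ⟨hvu, hvw, huw⟩), u, hvu, huw⟩
  rw [← card_neighborFinset_eq_degree, ← card_neighborFinset_eq_degree,
    ← card_erase_add_one ((mem_neighborFinset ..).mpr hvu.symm)]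
  exact Nat.add_le_add_right (card_le_card hsub) 1

lemma sum_degree_div_degree_le (hG : G.CliqueFree 3) (v : V) :
    ∑ u ∈ G.neighborFinset v, (G.degree u : ℚ) / G.degree v ≤ G.distTwoGraph.degree v + 1 := by
  rw [← sum_div, ← card_neighborFinset_eq_degree, ← expect_eq_sum_div_card]
  rcases (G.neighborFinset v).eq_empty_or_nonempty with hv | hv
  · rw [hv, expect_empty]
    positivity
  · refine expect_le hv fun u hu ↦ ?_
    exact_mod_cast degree_le_degree_distTwoGraph_add_one hG ((mem_neighborFinset ..).mp hu)

lemma two_mul_card_edgeFinset_le (hG : G.CliqueFree 3) :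
    2 * #G.edgeFinset ≤ 2 * #G.distTwoGraph.edgeFinset + Fintype.card V := by
  have hpos : ∀ u v, G.Adj u v → (0 : ℚ) < G.degree u := fun u v h ↦
    Nat.cast_pos.mpr (G.degree_pos_iff_exists_adj u |>.mpr ⟨v, h⟩)
  suffices (2 * #G.edgeFinset : ℚ) ≤ 2 * #G.distTwoGraph.edgeFinset + Fintype.card V by
    exact_mod_cast this
  calc (2 * #G.edgeFinset : ℚ) = ∑ v, (G.degree v : ℚ) := by
        exact_mod_cast G.sum_degrees_eq_twice_card_edges.symm
    _ ≤ ∑ v, ∑ u ∈ G.neighborFinset v, (G.degree u : ℚ) / G.degree v :=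
        sum_degree_le_sum_sum_div hpos
    _ ≤ ∑ v, ((G.distTwoGraph.degree v : ℚ) + 1) :=
        sum_le_sum fun v _ ↦ sum_degree_div_degree_le hG v
    _ = 2 * #G.distTwoGraph.edgeFinset + Fintype.card V := by
        rw [sum_add_distrib, ← Nat.cast_sum, sum_degrees_eq_twice_card_edges]
        simp

end SimpleGraph

theorem stmt_3 {V : Type*} [Fintype V] [DecidableEq V]
    (G : SimpleGraph V) [DecidableRel G.Adj]
    (hG : G.CliqueFree 3)
    (F : Set (Sym2 V))
    (hF : F = {e : Sym2 V | ∃ u w : V, e = s(u, w) ∧ u ≠ w ∧ ¬ G.Adj u w ∧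
        ∃ v : V, G.Adj u v ∧ G.Adj v w}) :
    G.edgeFinset.card ≤ F.ncard + Fintype.card V := by
  have hF' : F.ncard = #G.distTwoGraph.edgeFinset := by
    rw [hF, ← SimpleGraph.edgeSet_distTwoGraph, ← SimpleGraph.coe_edgeFinset, Set.ncard_coe_finset]
  have := SimpleGraph.two_mul_card_edgeFinset_le hG
  omega
end

section
/- For all real numbers X, Y, Z with 0 ≤ X ≤ 1, 0 ≤ Y ≤ 1, 0 ≤ Z ≤ 1: √X + √Y + √Z ≤ 2 + √(XYZ). -/
/-! Put `a = √X`, `b = √Y`, `c = √Z`; then `√(XYZ) = abc` and the claim becomes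
`a + b + c ≤ 2 + abc` on the unit cube, whose slack splits as `(1 - a)(1 - b) + (1 - c)(1 - ab)`. -/

theorem add_add_le_two_add_mul_mul {R : Type*} [CommRing R] [LinearOrder R] [IsStrictOrderedRing R]
    {a b c : R} (ha1 : a ≤ 1) (hb : 0 ≤ b) (hb1 : b ≤ 1) (hc1 : c ≤ 1) :
    a + b + c ≤ 2 + a * b * c := by
  have hab : a * b ≤ 1 := (mul_le_of_le_one_left hb ha1).trans hb1
  have hslack : 0 ≤ (1 - a) * (1 - b) + (1 - c) * (1 - a * b) :=
    add_nonneg (mul_nonneg (sub_nonneg.2 ha1) (sub_nonneg.2 hb1))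
      (mul_nonneg (sub_nonneg.2 hc1) (sub_nonneg.2 hab))
  linarith [show (1 - a) * (1 - b) + (1 - c) * (1 - a * b) = 2 + a * b * c - (a + b + c) by ring]

theorem stmt_7_general (X Y Z : ℝ)
    (hX1 : X ≤ 1) (hY : 0 ≤ Y) (hY1 : Y ≤ 1) (hZ : 0 ≤ Z) (hZ1 : Z ≤ 1) :
    Real.sqrt X + Real.sqrt Y + Real.sqrt Z ≤ 2 + Real.sqrt (X * Y * Z) := by
  rw [Real.sqrt_mul' _ hZ, Real.sqrt_mul' X hY]
  exact add_add_le_two_add_mul_mul (Real.sqrt_le_one.2 hX1) (Real.sqrt_nonneg Y)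
    (Real.sqrt_le_one.2 hY1) (Real.sqrt_le_one.2 hZ1)

theorem stmt_7 (X Y Z : ℝ)
    (hX : 0 ≤ X) (hX1 : X ≤ 1) (hY : 0 ≤ Y) (hY1 : Y ≤ 1) (hZ : 0 ≤ Z) (hZ1 : Z ≤ 1) :
    Real.sqrt X + Real.sqrt Y + Real.sqrt Z ≤ 2 + Real.sqrt (X * Y * Z) :=
  stmt_7_general X Y Z hX1 hY hY1 hZ hZ1
end
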